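/- Let M ≥ 1 and N = 2M. Define the vector z ∈ ℝ^{N+1} (indices 0,…,N) by z_{2k} = 0 for 0 ≤ k ≤ M and z_{2k+1} = −√( (2M+1)! / (2k+1)! ) / ( 4^{M−k} · (M−k)! ) for 0 ≤ k ≤ M−1. Then z solves the linear system A^N z = g^N, where g^N ∈ ℝ^{N+1} has entries g_p = a_{p, 2M+1}; that is, for every p with 0 ≤ p ≤ 2M, ∑_{j=0}^{2M} a_{p,j} · z_j = a_{p, 2M+1}. -/

import Mathlib

open Real MeasureTheory Matrix Filter

/-- Physicists' Hermite polynomials: H_0 = 1, H_1 = 2x, H_{n+1} = 2x H_n - 2n H_{n-1}. -/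
noncomputable def hermiteH : ℕ → ℝ → ℝ
  | 0, _ => 1
  | 1, x => 2 * x
  | (n + 2), x => 2 * x * hermiteH (n + 1) x - 2 * (n + 1) * hermiteH n x

/-- Asymmetric Hermite basis function ψ_m. -/
noncomputable def psi (T : ℝ) (m : ℕ) (v : ℝ) : ℝ :=
  Real.exp (-v ^ 2 / T) * T ^ (-(1 : ℝ) / 2) *
    ((2 : ℝ) ^ m * (Nat.factorial m : ℝ) * Real.sqrt π) ^ (-(1 : ℝ) / 2) *
    hermiteH m (v / Real.sqrt T)

/-- Gram coefficient a_{m,n} = ∫ ψ_m ψ_n. -/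
noncomputable def gramA (T : ℝ) (m n : ℕ) : ℝ := ∫ v : ℝ, psi T m v * psi T n v

/-!
Substituting `v = √T u` turns `a_{m,n}` into `(√T)⁻¹ K_m K_n ∫ e^{-2u²} H_m(u) H_n(u) du`.
For the weight `e^{-2u²}` the polynomial `H_{2M+1}(√2 u)` is orthogonal to every polynomial of
degree `≤ 2M`: in the variable `w = √2 u` this is the classical orthogonality of `H_{2M+1}`
against `e^{-w²}`. The multiplication theorem
`H_n(γx) = Σ_i γ^{n-2i} (γ²-1)^i n! / ((n-2i)! i!) H_{n-2i}(x)` at `γ = √2` gives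
`K_{2M+1} (H_{2M+1}(u) - H_{2M+1}(√2 u) / √2^{2M+1}) = Σ_{j ≤ 2M} K_j z_j H_j(u)`,
and pairing this identity with `H_p`, `p ≤ 2M`, is the linear system.
-/

open Polynomial Finset

noncomputable def hermitePoly : ℕ → ℝ[X]
  | 0 => 1
  | 1 => C 2 * X
  | n + 2 => C 2 * X * hermitePoly (n + 1) - C (2 * ((n : ℝ) + 1)) * hermitePoly n

lemma hermiteH_succ (n : ℕ) (x : ℝ) :
    hermiteH (n + 1) x = 2 * x * hermiteH n x - 2 * n * hermiteH (n - 1) x := by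
  cases n with
  | zero => simp [hermiteH]
  | succ n => simp [hermiteH]

lemma eval_hermitePoly (n : ℕ) (x : ℝ) : (hermitePoly n).eval x = hermiteH n x := by
  induction n using Nat.strong_induction_on with
  | _ n ih =>
    match n with
    | 0 => simp [hermitePoly, hermiteH]
    | 1 => simp [hermitePoly, hermiteH]
    | n + 2 => simp [hermitePoly, hermiteH, ih n (by omega), ih (n + 1) (by omega)]

lemma natDegree_hermitePoly_le (n : ℕ) : (hermitePoly n).natDegree ≤ n := by
  induction n using Nat.strong_induction_on with
  | _ n ih =>
    match n with
    | 0 => simp [hermitePoly]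
    | 1 => simp [hermitePoly]
    | n + 2 =>
      refine (natDegree_sub_le _ _).trans (max_le ?_ ?_)
      · refine natDegree_mul_le.trans ?_
        have := ih (n + 1) (by omega)
        have : (C (2 : ℝ) * X).natDegree ≤ 1 := (natDegree_C_mul_le 2 X).trans natDegree_X_le
        omega
      · exact (natDegree_C_mul_le _ _).trans ((ih n (by omega)).trans (by omega))

lemma derivative_hermitePoly (n : ℕ) :
    derivative (hermitePoly n) = C (2 * n : ℝ) * hermitePoly (n - 1) := by
  induction n using Nat.strong_induction_on with
  | _ n ih =>
    match n with
    | 0 => simp [hermitePoly]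
    | 1 => simp [hermitePoly]
    | n + 2 =>
      have hrec : hermitePoly (n + 1)
          = C 2 * X * hermitePoly n - C (2 * n : ℝ) * hermitePoly (n - 1) := by
        cases n with
        | zero => simp [hermitePoly]
        | succ n => simp [hermitePoly]
      rw [hermitePoly, derivative_sub, derivative_mul, derivative_C_mul, derivative_C_mul,
        derivative_X, ih (n + 1) (by omega), ih n (by omega),
        show n + 2 - 1 = n + 1 from rfl, hrec]
      push_cast
      simp only [map_mul, map_add, map_natCast, map_ofNat, C_1]
      ring

lemma hasDerivAt_hermiteH (n : ℕ) (x : ℝ) :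
    HasDerivAt (hermiteH n) (2 * n * hermiteH (n - 1) x) x := by
  have h := (hermitePoly n).hasDerivAt x
  simp only [eval_hermitePoly, derivative_hermitePoly, eval_mul, eval_C] at h
  exact h

lemma hasDerivAt_exp_neg_sq_mul_hermiteH (n : ℕ) (x : ℝ) :
    HasDerivAt (fun y => exp (-y ^ 2) * hermiteH n y)
      (-(exp (-x ^ 2) * hermiteH (n + 1) x)) x := by
  have hexp : HasDerivAt (fun y : ℝ => exp (-y ^ 2)) (exp (-x ^ 2) * -(2 * x)) x := by
    simpa using ((hasDerivAt_pow 2 x).neg).exp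
  refine (hexp.mul (hasDerivAt_hermiteH n x)).congr_deriv ?_
  rw [hermiteH_succ]
  ring

lemma integrable_eval_mul_exp_neg_mul_sq {b : ℝ} (hb : 0 < b) (P : ℝ[X]) :
    Integrable fun x => P.eval x * exp (-b * x ^ 2) := by
  simp_rw [eval_eq_sum_range, Finset.sum_mul, mul_assoc]
  refine integrable_finsetSum _ fun j _ => Integrable.const_mul ?_ _
  simpa using integrable_rpow_mul_exp_neg_mul_sq hb (s := j)
    (by linarith [(Nat.cast_nonneg j : (0 : ℝ) ≤ j)])

lemma integrable_eval_mul_exp_neg_sq_mul_hermiteH (P : ℝ[X]) (n : ℕ) :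
    Integrable fun x => P.eval x * (exp (-x ^ 2) * hermiteH n x) := by
  refine (integrable_eval_mul_exp_neg_mul_sq one_pos (P * hermitePoly n)).congr
    (ae_of_all _ fun x => ?_)
  simp only [eval_mul, eval_hermitePoly, neg_mul, one_mul]
  ring

lemma integral_eval_mul_exp_neg_sq_mul_hermiteH {n : ℕ} (P : ℝ[X]) (hP : P.natDegree < n) :
    ∫ x, P.eval x * (exp (-x ^ 2) * hermiteH n x) = 0 := by
  induction n generalizing P with
  | zero => omega
  | succ n ih =>
    have hderiv : ∫ x, (derivative P).eval x * (exp (-x ^ 2) * hermiteH n x) = 0 := by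
      rcases Nat.eq_zero_or_pos P.natDegree with h0 | hpos
      · simp [derivative_of_natDegree_zero h0]
      · exact ih _ ((natDegree_derivative_lt hpos.ne').trans_le (by omega))
    have ibp := integral_mul_deriv_eq_deriv_mul_of_integrable
      (fun x _ => P.hasDerivAt x) (fun x _ => hasDerivAt_exp_neg_sq_mul_hermiteH n x)
      (by simpa only [Pi.mul_def, Pi.neg_def, mul_neg] using
        (integrable_eval_mul_exp_neg_sq_mul_hermiteH P (n + 1)).neg)
      (integrable_eval_mul_exp_neg_sq_mul_hermiteH _ n)
      (integrable_eval_mul_exp_neg_sq_mul_hermiteH P n)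
    simpa only [mul_neg, integral_neg, hderiv, neg_zero, neg_eq_zero] using ibp

lemma integral_exp_neg_two_mul_sq_mul_hermiteH_mul_hermiteH_sqrt_two_mul {p n : ℕ}
    (hpn : p < n) :
    ∫ u, exp (-2 * u ^ 2) * hermiteH p u * hermiteH n (√2 * u) = 0 := by
  set Q : ℝ[X] := (hermitePoly p).comp (C (√2)⁻¹ * X)
  have hQ : Q.natDegree < n := by
    refine (natDegree_comp_le.trans ?_).trans_lt hpn
    have := natDegree_hermitePoly_le p
    have : (C (√2)⁻¹ * X).natDegree ≤ 1 := (natDegree_C_mul_le _ X).trans natDegree_X_le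
    nlinarith
  have hcomp (u : ℝ) : exp (-2 * u ^ 2) * hermiteH p u * hermiteH n (√2 * u)
      = Q.eval (√2 * u) * (exp (-(√2 * u) ^ 2) * hermiteH n (√2 * u)) := by
    have hs : (√2)⁻¹ * (√2 * u) = u := by field_simp
    simp only [Q, eval_comp, eval_mul, eval_C, eval_X, hs, eval_hermitePoly, mul_pow,
      Real.sq_sqrt (zero_le_two : (0 : ℝ) ≤ 2)]
    ring_nf
  simp_rw [hcomp]
  rw [Measure.integral_comp_mul_left (fun w => Q.eval w * (exp (-w ^ 2) * hermiteH n w)),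
    integral_eval_mul_exp_neg_sq_mul_hermiteH Q hQ, smul_zero]

lemma two_mul_mul_hermiteH (m : ℕ) (x : ℝ) :
    2 * x * hermiteH m x = hermiteH (m + 1) x + 2 * m * hermiteH (m - 1) x := by
  rw [hermiteH_succ]
  ring

-- The factor `n.descFactorial (2 * i) = n! / (n - 2i)!` vanishes for `2 * i > n`, which makes the
-- truncated subtractions `n - 2 * i` here and in `hermiteH_mul` harmless.
noncomputable def hermiteMulCoeff (γ : ℝ) (n i : ℕ) : ℝ :=
  γ ^ (n - 2 * i) * (γ ^ 2 - 1) ^ i * n.descFactorial (2 * i) / i.factorial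

lemma hermiteMulCoeff_zero_right (γ : ℝ) (n : ℕ) : hermiteMulCoeff γ n 0 = γ ^ n := by
  simp [hermiteMulCoeff]

lemma hermiteMulCoeff_eq_zero {γ : ℝ} {n i : ℕ} (h : n < 2 * i) :
    hermiteMulCoeff γ n i = 0 := by
  simp [hermiteMulCoeff, Nat.descFactorial_eq_zero_iff_lt.mpr h]

lemma hermiteMulCoeff_succ_succ (γ : ℝ) (n i : ℕ) :
    hermiteMulCoeff γ (n + 2) (i + 1) = γ * hermiteMulCoeff γ (n + 1) (i + 1)
      + 2 * γ * (n + 1 - 2 * i : ℕ) * hermiteMulCoeff γ (n + 1) i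
      - 2 * (n + 1) * hermiteMulCoeff γ n i := by
  have hd₂ : ((n + 2).descFactorial (2 * (i + 1)) : ℝ)
      = (n + 2) * (n + 1) * n.descFactorial (2 * i) := by
    rw [show 2 * (i + 1) = 2 * i + 1 + 1 by ring, Nat.succ_descFactorial_succ,
      Nat.succ_descFactorial_succ]
    push_cast; ring
  have hd₁ : ((n + 1).descFactorial (2 * (i + 1)) : ℝ)
      = (n + 1) * (n - 2 * i : ℕ) * n.descFactorial (2 * i) := by
    rw [show 2 * (i + 1) = 2 * i + 1 + 1 by ring, Nat.succ_descFactorial_succ,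
      Nat.descFactorial_succ]
    push_cast; ring
  have hd₀ : ((n + 1 - 2 * i : ℕ) : ℝ) * (n + 1).descFactorial (2 * i)
      = (n + 1) * n.descFactorial (2 * i) := mod_cast Nat.succ_descFactorial n (2 * i)
  simp only [hermiteMulCoeff, hd₂, hd₁, Nat.factorial_succ]
  rcases lt_or_ge n (2 * i) with h | h
  · have hD : (n.descFactorial (2 * i) : ℝ) = 0 :=
      mod_cast Nat.descFactorial_eq_zero_iff_lt.mpr h
    rw [hD] at hd₀ ⊢
    linear_combination (-2 * γ * γ ^ (n + 1 - 2 * i) * (γ ^ 2 - 1) ^ i / i.factorial) * hd₀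
  · obtain ⟨m, rfl⟩ := Nat.exists_eq_add_of_le h
    rw [show 2 * i + m + 1 - 2 * i = m + 1 by omega] at hd₀
    rw [show 2 * i + m + 1 - 2 * i = m + 1 by omega, show 2 * i + m + 2 - 2 * (i + 1) = m by omega,
      show 2 * i + m - 2 * i = m by omega, show 2 * i + m + 1 - 2 * (i + 1) = m - 1 by omega]
    have hd' : ((2 * i + m + 1).descFactorial (2 * i) : ℝ)
        = (2 * i + m + 1) * (2 * i + m).descFactorial (2 * i) / (m + 1) := by
      push_cast at hd₀ ⊢
      rw [eq_div_iff (by positivity), ← hd₀]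
      ring
    rw [hd']
    rcases m with _ | k
    · simp only [pow_zero, one_mul, add_zero, Nat.cast_mul, Nat.cast_ofNat, Nat.cast_add,
        Nat.cast_one, zero_tsub, CharP.cast_eq_zero, mul_zero, zero_mul, zero_div, zero_add,
        mul_one, pow_one, div_one]
      field_simp
      ring
    · simp only [Nat.add_sub_cancel, pow_succ]
      push_cast
      field_simp
      ring

lemma hermiteMulCoeff_mul_two_mul_mul_hermiteH (γ x : ℝ) (n i : ℕ) :
    hermiteMulCoeff γ (n + 1) i * (2 * x * hermiteH (n + 1 - 2 * i) x)
      = hermiteMulCoeff γ (n + 1) i * hermiteH (n + 2 - 2 * i) x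
        + 2 * (n + 1 - 2 * i : ℕ) * hermiteMulCoeff γ (n + 1) i * hermiteH (n - 2 * i) x := by
  rcases lt_or_ge (n + 1) (2 * i) with h | h
  · simp [hermiteMulCoeff_eq_zero h]
  · rw [two_mul_mul_hermiteH, show n + 1 - 2 * i + 1 = n + 2 - 2 * i by omega,
      show n + 1 - 2 * i - 1 = n - 2 * i by omega]
    ring

theorem hermiteH_mul (γ x : ℝ) {n N : ℕ} (hN : n < 2 * N) :
    hermiteH n (γ * x) = ∑ i ∈ range N, hermiteMulCoeff γ n i * hermiteH (n - 2 * i) x := by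
  induction n using Nat.strong_induction_on generalizing N with
  | _ n ih =>
    obtain ⟨N, rfl⟩ : ∃ N', N = N' + 1 := ⟨N - 1, by omega⟩
    rw [sum_range_succ', hermiteMulCoeff_zero_right, Nat.mul_zero, Nat.sub_zero]
    match n with
    | 0 | 1 =>
      rw [sum_eq_zero fun i _ => by rw [hermiteMulCoeff_eq_zero (by omega), zero_mul]]
      simp [hermiteH, mul_left_comm]
    | n + 2 =>
      set b := hermiteMulCoeff γ
      have hlast : ((n + 1 - 2 * N : ℕ) : ℝ) = 0 := by
        rw [show n + 1 - 2 * N = 0 by omega, Nat.cast_zero]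
      calc hermiteH (n + 2) (γ * x)
          = γ * ∑ i ∈ range (N + 1), b (n + 1) i * (2 * x * hermiteH (n + 1 - 2 * i) x)
            - 2 * (n + 1) * ∑ i ∈ range N, b n i * hermiteH (n - 2 * i) x := by
            rw [hermiteH_succ, Nat.add_sub_cancel,
              ih (n + 1) (by omega) (by omega : n + 1 < 2 * (N + 1)),
              ih n (by omega) (by omega : n < 2 * N)]
            simp only [mul_sum]
            push_cast
            congr 1
            exact sum_congr rfl fun i _ => by ring
        _ = γ * (γ ^ (n + 1) * hermiteH (n + 2) x
              + ∑ i ∈ range N, b (n + 1) (i + 1) * hermiteH (n - 2 * i) x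
              + ∑ i ∈ range N, 2 * (n + 1 - 2 * i : ℕ) * b (n + 1) i * hermiteH (n - 2 * i) x)
            - 2 * (n + 1) * ∑ i ∈ range N, b n i * hermiteH (n - 2 * i) x := by
            simp only [b, hermiteMulCoeff_mul_two_mul_mul_hermiteH, sum_add_distrib]
            rw [sum_range_succ' _ N, sum_range_succ _ N, hlast, hermiteMulCoeff_zero_right]
            simp only [mul_add, mul_one, Nat.add_sub_add_right, Nat.mul_zero, Nat.sub_zero]
            ring
        _ = ∑ i ∈ range N, b (n + 2) (i + 1) * hermiteH (n + 2 - 2 * (i + 1)) x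
            + γ ^ (n + 2) * hermiteH (n + 2) x := by
            simp only [b, hermiteMulCoeff_succ_succ, mul_add, mul_one, Nat.add_sub_add_right,
              sub_mul, add_mul, sum_add_distrib, sum_sub_distrib, mul_sum, pow_succ]
            ring_nf

-- The constant `K_m` of the header, the normalising factor of `psi T m`.
noncomputable def hermiteNorm (m : ℕ) : ℝ :=
  ((2 : ℝ) ^ m * m.factorial * √π) ^ (-(1 : ℝ) / 2)

noncomputable def hermiteGram (m n : ℕ) : ℝ :=
  ∫ u, exp (-2 * u ^ 2) * hermiteH m u * hermiteH n u

lemma rpow_neg_one_div_two {x : ℝ} (hx : 0 ≤ x) : x ^ (-(1 : ℝ) / 2) = (√x)⁻¹ := by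
  rw [neg_div, Real.rpow_neg hx, ← Real.sqrt_eq_rpow]

lemma gramA_eq_hermiteGram {T : ℝ} (hT : 0 < T) (m n : ℕ) :
    gramA T m n = (√T)⁻¹ * (hermiteNorm m * hermiteNorm n * hermiteGram m n) := by
  have hsT : 0 < √T := Real.sqrt_pos.mpr hT
  have hprod (v : ℝ) : psi T m v * psi T n v
      = ((√T)⁻¹ ^ 2 * (hermiteNorm m * hermiteNorm n))
        * (exp (-2 * (v / √T) ^ 2) * hermiteH m (v / √T) * hermiteH n (v / √T)) := by
    have hexp : exp (-v ^ 2 / T) * exp (-v ^ 2 / T) = exp (-2 * (v / √T) ^ 2) := by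
      rw [← Real.exp_add, div_pow, Real.sq_sqrt hT.le]
      ring_nf
    simp only [psi, hermiteNorm, rpow_neg_one_div_two hT.le, ← hexp]
    ring
  simp_rw [gramA, hprod]
  rw [integral_const_mul, Measure.integral_comp_div
    (fun u => exp (-2 * u ^ 2) * hermiteH m u * hermiteH n u), abs_of_pos hsT, smul_eq_mul,
    ← hermiteGram]
  field_simp

lemma sum_range_two_mul_add_one (f : ℕ → ℝ) (m : ℕ) :
    ∑ j ∈ range (2 * m + 1), f j
      = ∑ k ∈ range (m + 1), f (2 * k) + ∑ k ∈ range m, f (2 * k + 1) := by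
  induction m with
  | zero => simp
  | succ m ih =>
    rw [show 2 * (m + 1) + 1 = 2 * m + 1 + 1 + 1 by ring, sum_range_succ, sum_range_succ, ih,
      sum_range_succ (fun k => f (2 * k)) (m + 1), sum_range_succ (fun k => f (2 * k + 1)) m]
    ring_nf

lemma sqrt_two_pow (a : ℕ) : √((2 : ℝ) ^ a) = √2 ^ a := by
  rw [Real.sqrt_eq_iff_mul_self_eq_of_pos (by positivity), ← mul_pow,
    Real.mul_self_sqrt zero_le_two]

lemma hermiteNorm_mul_neg_sqrt_div_eq {M k : ℕ} (hk : k < M) :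
    hermiteNorm (2 * k + 1) * (-√((2 * M + 1).factorial / (2 * k + 1).factorial : ℝ) /
        ((4 : ℝ) ^ (M - k) * (M - k).factorial))
      = -(hermiteNorm (2 * M + 1) / √2 ^ (2 * M + 1))
        * hermiteMulCoeff √2 (2 * M + 1) (M - k) := by
  have hexp : 2 * M + 1 - 2 * (M - k) = 2 * k + 1 := by omega
  have hdesc : ((2 * M + 1).descFactorial (2 * (M - k)) : ℝ)
      = (2 * M + 1).factorial / (2 * k + 1).factorial := by
    rw [eq_div_iff (by positivity), mul_comm, ← hexp]
    exact_mod_cast Nat.factorial_mul_descFactorial (by omega)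
  have h4 : (4 : ℝ) ^ (M - k) = √2 ^ (2 * (M - k)) * √2 ^ (2 * (M - k)) := by
    rw [← mul_pow, Real.mul_self_sqrt zero_le_two, pow_mul]; norm_num
  have hpow : √2 ^ (2 * M + 1) = √2 ^ (2 * k + 1) * √2 ^ (2 * (M - k)) := by
    rw [← pow_add]; congr 1; omega
  simp only [hermiteNorm, hermiteMulCoeff]
  rw [rpow_neg_one_div_two (by positivity), rpow_neg_one_div_two (by positivity), hexp, hdesc,
    Real.sq_sqrt zero_le_two, h4, Real.sqrt_div (by positivity), Real.sqrt_mul (by positivity),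
    Real.sqrt_mul (by positivity), Real.sqrt_mul (by positivity), Real.sqrt_mul (by positivity),
    sqrt_two_pow, sqrt_two_pow, hpow]
  have hA := Real.sq_sqrt (by positivity : (0 : ℝ) ≤ (2 * M + 1).factorial)
  have hC := Real.sq_sqrt (by positivity : (0 : ℝ) ≤ (2 * k + 1).factorial)
  set a := √((2 * M + 1).factorial : ℝ)
  set c := √((2 * k + 1).factorial : ℝ)
  rw [← hA, ← hC]
  field_simp
  ring

lemma hermiteH_sqrt_two_mul_two_mul_add_one (M : ℕ) (u : ℝ) :
    hermiteH (2 * M + 1) (√2 * u) = √2 ^ (2 * M + 1) * hermiteH (2 * M + 1) u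
      + ∑ k ∈ range M, hermiteMulCoeff √2 (2 * M + 1) (M - k) * hermiteH (2 * k + 1) u := by
  rw [hermiteH_mul √2 u (by omega : 2 * M + 1 < 2 * (M + 1)), sum_range_succ',
    hermiteMulCoeff_zero_right, ← sum_range_reflect, add_comm]
  congr 1
  refine sum_congr rfl fun k hk => ?_
  have hk := mem_range.mp hk
  rw [show M - 1 - k + 1 = M - k by omega, show 2 * M + 1 - 2 * (M - k) = 2 * k + 1 by omega]

lemma integrable_exp_neg_two_mul_sq_mul_hermiteH_mul_hermiteH (m n : ℕ) :
    Integrable fun u => exp (-2 * u ^ 2) * hermiteH m u * hermiteH n u := by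
  refine (integrable_eval_mul_exp_neg_mul_sq two_pos (hermitePoly m * hermitePoly n)).congr
    (ae_of_all _ fun u => ?_)
  simp only [eval_mul, eval_hermitePoly]
  ring

section LinearSystem

variable {M : ℕ} {z : ℕ → ℝ} (hzeven : ∀ k ≤ M, z (2 * k) = 0)
  (hzodd : ∀ k < M, z (2 * k + 1) =
    -√((2 * M + 1).factorial / (2 * k + 1).factorial : ℝ)
      / ((4 : ℝ) ^ (M - k) * (M - k).factorial))
include hzeven hzodd

lemma sum_hermiteNorm_mul_mul_hermiteH_sub (u : ℝ) :
    ∑ j ∈ range (2 * M + 1), hermiteNorm j * z j * hermiteH j u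
        - hermiteNorm (2 * M + 1) * hermiteH (2 * M + 1) u
      = -(hermiteNorm (2 * M + 1) / √2 ^ (2 * M + 1)) * hermiteH (2 * M + 1) (√2 * u) := by
  rw [sum_range_two_mul_add_one, sum_eq_zero fun k hk => by
      rw [hzeven k (Nat.lt_succ_iff.mp (mem_range.mp hk)), mul_zero, zero_mul],
    hermiteH_sqrt_two_mul_two_mul_add_one, mul_add, mul_sum]
  rw [sum_congr rfl fun k hk => by
    rw [hzodd k (mem_range.mp hk), hermiteNorm_mul_neg_sqrt_div_eq (mem_range.mp hk)]]
  simp only [zero_add, mul_assoc]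
  field_simp
  ring

lemma sum_hermiteNorm_mul_mul_hermiteGram {p : ℕ} (hp : p ≤ 2 * M) :
    ∑ j ∈ range (2 * M + 1), hermiteNorm j * z j * hermiteGram p j
      = hermiteNorm (2 * M + 1) * hermiteGram p (2 * M + 1) := by
  rw [← sub_eq_zero]
  calc ∑ j ∈ range (2 * M + 1), hermiteNorm j * z j * hermiteGram p j
        - hermiteNorm (2 * M + 1) * hermiteGram p (2 * M + 1)
      = ∫ u, exp (-2 * u ^ 2) * hermiteH p u
          * (∑ j ∈ range (2 * M + 1), hermiteNorm j * z j * hermiteH j u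
            - hermiteNorm (2 * M + 1) * hermiteH (2 * M + 1) u) := by
        have hint (c : ℝ) (j : ℕ) :
            Integrable fun u => exp (-2 * u ^ 2) * hermiteH p u * (c * hermiteH j u) :=
          ((integrable_exp_neg_two_mul_sq_mul_hermiteH_mul_hermiteH p j).const_mul c).congr
            (ae_of_all _ fun u => by ring)
        have hgram (c : ℝ) (j : ℕ) :
            ∫ u, exp (-2 * u ^ 2) * hermiteH p u * (c * hermiteH j u) = c * hermiteGram p j := by
          rw [hermiteGram, ← integral_const_mul]
          congr 1 with u
          ring
        simp_rw [mul_sub, mul_sum]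
        rw [integral_sub (integrable_finsetSum _ fun j _ => hint _ j) (hint _ _),
          integral_finsetSum _ fun j _ => hint _ j]
        simp_rw [hgram]
    _ = -(hermiteNorm (2 * M + 1) / √2 ^ (2 * M + 1))
          * ∫ u, exp (-2 * u ^ 2) * hermiteH p u * hermiteH (2 * M + 1) (√2 * u) := by
        simp_rw [sum_hermiteNorm_mul_mul_hermiteH_sub hzeven hzodd, ← integral_const_mul]
        congr 1 with u
        ring
    _ = 0 := by
        rw [integral_exp_neg_two_mul_sq_mul_hermiteH_mul_hermiteH_sqrt_two_mul (by omega), mul_zero]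

end LinearSystem

theorem gramA_linear_system_even_general (T : ℝ) (hT : 0 < T) (M : ℕ)
    (z : ℕ → ℝ)
    (hzeven : ∀ k ≤ M, z (2 * k) = 0)
    (hzodd : ∀ k < M, z (2 * k + 1) =
      -Real.sqrt ((Nat.factorial (2 * M + 1) : ℝ) / (Nat.factorial (2 * k + 1) : ℝ)) /
        ((4 : ℝ) ^ (M - k) * (Nat.factorial (M - k) : ℝ)))
    (p : ℕ) (hp : p ≤ 2 * M) :
    ∑ j ∈ Finset.range (2 * M + 1), gramA T p j * z j = gramA T p (2 * M + 1) := by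
  calc ∑ j ∈ range (2 * M + 1), gramA T p j * z j
      = (√T)⁻¹ * hermiteNorm p
          * ∑ j ∈ range (2 * M + 1), hermiteNorm j * z j * hermiteGram p j := by
        rw [mul_sum]
        exact sum_congr rfl fun j _ => by rw [gramA_eq_hermiteGram hT]; ring
    _ = gramA T p (2 * M + 1) := by
        rw [sum_hermiteNorm_mul_mul_hermiteGram hzeven hzodd hp, gramA_eq_hermiteGram hT]
        ring

theorem gramA_linear_system_even (T : ℝ) (hT : 0 < T) (M : ℕ) (hM : 1 ≤ M)
    (z : ℕ → ℝ)
    (hzeven : ∀ k ≤ M, z (2 * k) = 0)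
    (hzodd : ∀ k < M, z (2 * k + 1) =
      -Real.sqrt ((Nat.factorial (2 * M + 1) : ℝ) / (Nat.factorial (2 * k + 1) : ℝ)) /
        ((4 : ℝ) ^ (M - k) * (Nat.factorial (M - k) : ℝ)))
    (p : ℕ) (hp : p ≤ 2 * M) :
    ∑ j ∈ Finset.range (2 * M + 1), gramA T p j * z j = gramA T p (2 * M + 1) :=
  gramA_linear_system_even_general T hT M z hzeven hzodd p hp
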